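/- For the WARM star graph with n ≥ 2 edges, the equilibrium (1/n, …, 1/n) is linearly stable if and only if α < n+1, and critical if and only if α = n+1. -/

import Mathlib

/-!
At the uniform point every set `A` acts only through its size, so the Jacobian has a constant
diagonal `d` and a constant off-diagonal entry `c`: it is `(d - c) I + c J` with `J` the rank-one
all-ones matrix. Its eigenvalues are therefore `d - c` and `d - c + n c`, which for the star graph
are `α / (n + 1) - 1` and `-1`; only the first one can change sign.
-/

open Finset

noncomputable section

/-- Membership in the simplex `Δ`. -/
def InSimplex {ι : Type*} [Fintype ι] (v : ι → ℝ) : Prop :=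
  (∀ i, 0 ≤ v i) ∧ ∑ i, v i = 1

/-- A WARM weight: a probability distribution on the subsets of the colour set,
giving no mass to the empty set. -/
def IsWarmWeight {ι : Type*} [Fintype ι] [DecidableEq ι] (p : Finset ι → ℝ) : Prop :=
  p ∅ = 0 ∧ (∀ A, 0 ≤ p A ∧ p A ≤ 1) ∧ ∑ A : Finset ι, p A = 1

/-- The WARM vector field `F`. -/
def warmF {ι : Type*} [Fintype ι] [DecidableEq ι] (α : ℝ) (p : Finset ι → ℝ)
    (v : ι → ℝ) (i : ι) : ℝ :=
  -v i + ∑ A ∈ Finset.univ.filter (fun A : Finset ι => i ∈ A),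
      p A * v i ^ α / (∑ j ∈ A, v j ^ α)

/-- The Jacobian matrix `D(v)`. -/
def warmD {ι : Type*} [Fintype ι] [DecidableEq ι] (α : ℝ) (p : Finset ι → ℝ)
    (v : ι → ℝ) : Matrix ι ι ℝ :=
  Matrix.of fun i k =>
    if i = k then
      -1 + α * v i ^ (α - 1) *
        ∑ A ∈ Finset.univ.filter (fun A : Finset ι => i ∈ A),
          p A * ((∑ j ∈ A, v j ^ α) - v i ^ α) / (∑ j ∈ A, v j ^ α) ^ 2
    else
      -(α * v k ^ (α - 1) * v i ^ α *
        ∑ A ∈ Finset.univ.filter (fun A : Finset ι => i ∈ A ∧ k ∈ A),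
          p A / (∑ j ∈ A, v j ^ α) ^ 2)

/-- `μ ∈ ℂ` is an eigenvalue of the real matrix `M`, i.e. a root of its
characteristic polynomial. -/
def IsEigenvalue {ι : Type*} [Fintype ι] [DecidableEq ι] (M : Matrix ι ι ℝ) (μ : ℂ) : Prop :=
  (M.charpoly.map (algebraMap ℝ ℂ)).IsRoot μ

/-- Linear stability: every complex eigenvalue has negative real part. -/
def LinStable {ι : Type*} [Fintype ι] [DecidableEq ι] (M : Matrix ι ι ℝ) : Prop :=
  ∀ μ : ℂ, IsEigenvalue M μ → μ.re < 0

/-- Linear instability: some eigenvalue has positive real part. -/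
def LinUnstable {ι : Type*} [Fintype ι] [DecidableEq ι] (M : Matrix ι ι ℝ) : Prop :=
  ∃ μ : ℂ, IsEigenvalue M μ ∧ 0 < μ.re

/-- Critical: neither linearly stable nor linearly unstable. -/
def CriticalPt {ι : Type*} [Fintype ι] [DecidableEq ι] (M : Matrix ι ι ℝ) : Prop :=
  ¬ LinStable M ∧ ¬ LinUnstable M


/-- The WARM star graph weight on `n` edges: each singleton and the full set get mass
`1/(n+1)`. -/
def starP (n : ℕ) : Finset (Fin n) → ℝ :=
  fun A =>
    if A = Finset.univ then 1 / ((n : ℝ) + 1)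
    else if A.card = 1 then 1 / ((n : ℝ) + 1)
    else 0

def constDiagMatrix {ι R : Type*} [DecidableEq ι] (d c : R) : Matrix ι ι R :=
  Matrix.of fun i k => if i = k then d else c

section constDiagMatrix

variable {ι : Type*} [DecidableEq ι]

theorem constDiagMatrix_map {R S : Type*} (f : R → S) (d c : R) :
    (constDiagMatrix d c : Matrix ι ι R).map f = constDiagMatrix (f d) (f c) := by
  ext i k
  simp only [constDiagMatrix, Matrix.map_apply, Matrix.of_apply, apply_ite f]

theorem scalar_sub_constDiagMatrix [Fintype ι] {R : Type*} [Ring R] (t d c : R) :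
    Matrix.scalar ι t - constDiagMatrix d c = constDiagMatrix (t - d) (-c) := by
  ext i k
  rcases eq_or_ne i k with rfl | h <;> simp [constDiagMatrix, *]

theorem det_constDiagMatrix [Fintype ι] [Nontrivial ι] {K : Type*} [Field K] (d c : K) :
    (constDiagMatrix d c : Matrix ι ι K).det
      = (d - c) ^ (Fintype.card ι - 1) * (d - c + Fintype.card ι * c) := by
  rcases eq_or_ne (d - c) 0 with h | h
  · obtain ⟨i, j, hij⟩ := exists_pair_ne ι
    rw [Matrix.det_zero_of_row_eq hij, h, zero_pow (Nat.sub_ne_zero_of_lt Fintype.one_lt_card),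
      zero_mul]
    ext k
    simp [constDiagMatrix, sub_eq_zero.mp h]
  · have hsplit : (constDiagMatrix d c : Matrix ι ι K) = (d - c) • ((1 : Matrix ι ι K) +
        Matrix.replicateCol (Fin 1) (fun _ => c / (d - c)) *
          Matrix.replicateRow (Fin 1) (fun _ : ι => (1 : K))) := by
      ext i k
      rcases eq_or_ne i k with rfl | hik
      · simp [constDiagMatrix, Matrix.mul_apply, mul_add, mul_div_cancel₀ c h]
      · simp [constDiagMatrix, Matrix.mul_apply, hik, mul_div_cancel₀ c h]
    rw [hsplit, Matrix.det_smul, Matrix.det_one_add_mul_comm, Matrix.det_unique,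
      ← pow_sub_one_mul Fintype.card_ne_zero, mul_assoc]
    congr 1
    simp only [Matrix.add_apply, Matrix.one_apply_eq, Matrix.replicateRow_mul_replicateCol_apply,
      dotProduct, one_mul, sum_const, card_univ, nsmul_eq_mul]
    field_simp

theorem isEigenvalue_constDiagMatrix_iff [Fintype ι] [Nontrivial ι] (d c : ℝ) (μ : ℂ) :
    IsEigenvalue (constDiagMatrix d c : Matrix ι ι ℝ) μ ↔
      μ = ((d - c : ℝ) : ℂ) ∨ μ = ((d - c + Fintype.card ι * c : ℝ) : ℂ) := by
  rw [IsEigenvalue, Polynomial.IsRoot, ← Matrix.charpoly_map, Matrix.eval_charpoly,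
    constDiagMatrix_map, scalar_sub_constDiagMatrix, det_constDiagMatrix, mul_eq_zero,
    pow_eq_zero_iff (Nat.sub_ne_zero_of_lt Fintype.one_lt_card)]
  push_cast
  constructor <;> rintro (h | h) <;> [left; right; left; right] <;> linear_combination h

end constDiagMatrix

section spectrum

variable {ι : Type*} [Fintype ι] [DecidableEq ι] {M : Matrix ι ι ℝ} {a b : ℝ}

theorem linStable_iff_of_isEigenvalue_iff (hM : ∀ μ, IsEigenvalue M μ ↔ μ = a ∨ μ = b)
    (hb : b < 0) : LinStable M ↔ a < 0 := by
  refine ⟨fun h ↦ by simpa using h a ((hM a).2 (.inl rfl)), fun ha μ hμ ↦ ?_⟩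
  rcases (hM μ).1 hμ with rfl | rfl <;> simpa

theorem linUnstable_iff_of_isEigenvalue_iff (hM : ∀ μ, IsEigenvalue M μ ↔ μ = a ∨ μ = b)
    (hb : b < 0) : LinUnstable M ↔ 0 < a := by
  refine ⟨fun ⟨μ, hμ, hre⟩ ↦ ?_, fun ha ↦ ⟨a, (hM a).2 (.inl rfl), by simpa⟩⟩
  rcases (hM μ).1 hμ with rfl | rfl
  · simpa using hre
  · exact absurd (by simpa using hre : 0 < b) hb.not_gt

theorem criticalPt_iff_of_isEigenvalue_iff (hM : ∀ μ, IsEigenvalue M μ ↔ μ = a ∨ μ = b)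
    (hb : b < 0) : CriticalPt M ↔ a = 0 := by
  rw [CriticalPt, linStable_iff_of_isEigenvalue_iff hM hb,
    linUnstable_iff_of_isEigenvalue_iff hM hb, not_lt, not_lt, le_antisymm_iff, and_comm]

end spectrum

theorem warmD_const {ι : Type*} [Fintype ι] [DecidableEq ι] (α : ℝ) (p : Finset ι → ℝ) {c : ℝ}
    (hc : 0 < c) :
    warmD α p (fun _ => c) = Matrix.of fun i k =>
      if i = k then
        -1 + α / c * ∑ A ∈ univ.filter (fun A : Finset ι => i ∈ A),
          p A * ((#A : ℝ) - 1) / (#A : ℝ) ^ 2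
      else
        -(α / c * ∑ A ∈ univ.filter (fun A : Finset ι => i ∈ A ∧ k ∈ A), p A / (#A : ℝ) ^ 2) := by
  have ht : c ^ α ≠ 0 := (Real.rpow_pos_of_pos hc α).ne'
  ext i k
  simp only [warmD, Matrix.of_apply, sum_const, nsmul_eq_mul, Real.rpow_sub_one hc.ne']
  split_ifs
  · have hterm (x m : ℝ) :
        x * (m * c ^ α - c ^ α) / (m * c ^ α) ^ 2 = x * (m - 1) / m ^ 2 / c ^ α := by
      rcases eq_or_ne m 0 with rfl | hm
      · simp
      · field_simp
    simp only [hterm, ← sum_div]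
    field_simp
  · simp only [mul_pow, ← div_div, ← sum_div]
    field_simp

theorem starP_univ (n : ℕ) : starP n univ = 1 / ((n : ℝ) + 1) := if_pos rfl

theorem starP_mul_card_sub_one {n : ℕ} {A : Finset (Fin n)} (hA : A ≠ univ) :
    starP n A * ((#A : ℝ) - 1) = 0 := by
  rw [starP, if_neg hA]
  split_ifs with h <;> simp [h]

theorem starP_eq_zero {n : ℕ} {A : Finset (Fin n)} (hA : A ≠ univ) (hcard : 1 < #A) :
    starP n A = 0 := by
  rw [starP, if_neg hA, if_neg hcard.ne']

theorem warmD_starP_barycentre {n : ℕ} (α : ℝ) (hn : n ≠ 0) :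
    warmD α (starP n) (fun _ => 1 / (n : ℝ)) =
      constDiagMatrix (-1 + α * ((n : ℝ) - 1) / (((n : ℝ) + 1) * n))
        (-(α / (((n : ℝ) + 1) * n))) := by
  have hn' : (n : ℝ) ≠ 0 := Nat.cast_ne_zero.2 hn
  rw [warmD_const α _ (by positivity)]
  ext i k
  simp only [constDiagMatrix, Matrix.of_apply]
  split_ifs with hik
  · rw [sum_eq_single_of_mem univ (by simp)
      fun A _ hA ↦ by rw [starP_mul_card_sub_one hA, zero_div]]
    rw [starP_univ, card_univ, Fintype.card_fin]
    field_simp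
  · rw [sum_eq_single_of_mem univ (by simp) fun A hA hne ↦ by
      rw [mem_filter] at hA
      rw [starP_eq_zero hne (one_lt_card.2 ⟨i, hA.2.1, k, hA.2.2, hik⟩), zero_div]]
    rw [starP_univ, card_univ, Fintype.card_fin]
    field_simp

theorem star_barycentre_stability_general (n : ℕ) (hn : 2 ≤ n) (α : ℝ) :
    (LinStable (warmD α (starP n) (fun _ => 1 / (n : ℝ))) ↔ α < (n : ℝ) + 1) ∧
    (CriticalPt (warmD α (starP n) (fun _ => 1 / (n : ℝ))) ↔ α = (n : ℝ) + 1) := by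
  have : Nontrivial (Fin n) := Fin.nontrivial_iff_two_le.2 hn
  have hpos : (0 : ℝ) < n + 1 := by positivity
  have hspec (μ : ℂ) : IsEigenvalue (warmD α (starP n) (fun _ => 1 / (n : ℝ))) μ ↔
      μ = ((α / (n + 1) - 1 : ℝ) : ℂ) ∨ μ = ((-1 : ℝ) : ℂ) := by
    rw [warmD_starP_barycentre α (by omega), isEigenvalue_constDiagMatrix_iff, Fintype.card_fin]
    congr! 3 <;> field_simp <;> ring
  rw [linStable_iff_of_isEigenvalue_iff hspec (by norm_num),
    criticalPt_iff_of_isEigenvalue_iff hspec (by norm_num), sub_neg, div_lt_one hpos, sub_eq_zero,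
    div_eq_one_iff_eq hpos.ne']
  exact ⟨Iff.rfl, Iff.rfl⟩

/-- **Stability of `1/n` for the WARM star graph.**
The barycentre is linearly stable iff `α < n + 1`, critical iff `α = n + 1`. -/
theorem star_barycentre_stability (n : ℕ) (hn : 2 ≤ n) (α : ℝ) (hα : 1 < α) :
    (LinStable (warmD α (starP n) (fun _ => 1 / (n : ℝ))) ↔ α < (n : ℝ) + 1) ∧
    (CriticalPt (warmD α (starP n) (fun _ => 1 / (n : ℝ))) ↔ α = (n : ℝ) + 1) :=
  star_barycentre_stability_general n hn α

end
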